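/- Let G be a subcubic graph and v a 2-vertex with incident edges e1, e2. If φ is a strong edge coloring of G − v from lists of size at least 10, then each e_i sees at most 8 colors under φ, so at least 2 colors remain available for each, and φ extends to a strong list edge coloring of G by coloring e1 then e2. -/

import Mathlib

/-!
If `v` has neighbours `u, u'` and `e = vu`, an edge of `G − v` that strongly sees `e` either
contains `u` or `u'` (at most `Δ - 1` such edges at each), or contains a neighbour `b ≠ v` of `u`
but not `u` itself (at most `(Δ - 1)²` such edges). For `Δ = 3` that is at most 8 edges, so lists
of size 10 leave two free colours on each edge at `v`. Give `e₁` a free colour and `e₂` a free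
colour different from it: every conflict not already excluded by `φ` involves an edge at `v`, and
is excluded by this choice.
-/

def StrongSees {V : Type*} (G : SimpleGraph V) (e e' : Sym2 V) : Prop :=
  (∃ v, v ∈ e ∧ v ∈ e') ∨ (∃ u v, u ∈ e ∧ v ∈ e' ∧ G.Adj u v)

def IsStrongEdgeColoring {V β : Type*} (G : SimpleGraph V) (c : Sym2 V → β) : Prop :=
  ∀ e ∈ G.edgeSet, ∀ e' ∈ G.edgeSet, e ≠ e' → StrongSees G e e' → c e ≠ c e'

/-- The graph obtained from `G` by deleting the vertex `v`. -/
def deleteVertex {V : Type*} (G : SimpleGraph V) (v : V) : SimpleGraph V where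
  Adj x y := G.Adj x y ∧ x ≠ v ∧ y ≠ v
  symm := ⟨fun _ _ h => ⟨h.1.symm, h.2.2, h.2.1⟩⟩
  loopless := ⟨fun x h => G.loopless.irrefl x h.1⟩

open Finset SimpleGraph

section

variable {V β : Type*}

lemma StrongSees.symm {G : SimpleGraph V} {e e' : Sym2 V} (h : StrongSees G e e') :
    StrongSees G e' e := by
  rcases h with ⟨x, hx, hx'⟩ | ⟨a, b, ha, hb, hab⟩
  exacts [Or.inl ⟨x, hx', hx⟩, Or.inr ⟨b, a, hb, ha, hab.symm⟩]

lemma mem_deleteVertex_edgeSet {G : SimpleGraph V} {v : V} {e : Sym2 V} :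
    e ∈ (deleteVertex G v).edgeSet ↔ e ∈ G.edgeSet ∧ v ∉ e := by
  induction e using Sym2.ind with
  | _ a b => simp [deleteVertex, eq_comm]

lemma strongSees_deleteVertex {G : SimpleGraph V} {v : V} {e e' : Sym2 V} (he : v ∉ e)
    (he' : v ∉ e') (h : StrongSees G e e') : StrongSees (deleteVertex G v) e e' := by
  rcases h with h | ⟨a, b, ha, hb, hab⟩
  · exact Or.inl h
  · exact Or.inr ⟨a, b, ha, hb, hab, ne_of_mem_of_not_mem ha he, ne_of_mem_of_not_mem hb he'⟩

def seenColors (G : SimpleGraph V) (v : V) (φ : Sym2 V → β) (e : Sym2 V) : Set β :=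
  {α | ∃ e' ∈ (deleteVertex G v).edgeSet, StrongSees G e e' ∧ φ e' = α}

lemma seenColors_finite [Finite V] (G : SimpleGraph V) (v : V) (φ : Sym2 V → β) (e : Sym2 V) :
    (seenColors G v φ e).Finite :=
  (Set.finite_range φ).subset fun _ ⟨f, _, _, hf⟩ => ⟨f, hf⟩

theorem IsStrongEdgeColoring.extend {G : SimpleGraph V} {v : V} {φ c : Sym2 V → β}
    (hφ : IsStrongEdgeColoring (deleteVertex G v) φ)
    (hcφ : ∀ f ∈ (deleteVertex G v).edgeSet, c f = φ f)
    (hfresh : ∀ e ∈ G.edgeSet, v ∈ e → c e ∉ seenColors G v φ e)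
    (hinj : ∀ e ∈ G.edgeSet, ∀ e' ∈ G.edgeSet, v ∈ e → v ∈ e' → e ≠ e' → c e ≠ c e') :
    IsStrongEdgeColoring G c := by
  intro e he e' he' hne hs
  by_cases hve : v ∈ e <;> by_cases hve' : v ∈ e'
  · exact hinj e he e' he' hve hve' hne
  · have hH' := mem_deleteVertex_edgeSet.2 ⟨he', hve'⟩
    rw [hcφ e' hH']
    exact fun h => hfresh e he hve ⟨e', hH', hs, h.symm⟩
  · have hH := mem_deleteVertex_edgeSet.2 ⟨he, hve⟩
    rw [hcφ e hH]
    exact fun h => hfresh e' he' hve' ⟨e, hH, hs.symm, h⟩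
  · have hH := mem_deleteVertex_edgeSet.2 ⟨he, hve⟩
    have hH' := mem_deleteVertex_edgeSet.2 ⟨he', hve'⟩
    rw [hcφ e hH, hcφ e' hH']
    exact hφ e hH e' hH' hne (strongSees_deleteVertex hve hve' hs)

lemma eq_or_eq_or_mem_deleteVertex_edgeSet {G : SimpleGraph V} {v : V} {e₁ e₂ f : Sym2 V}
    (hat : G.incidenceSet v = {e₁, e₂}) (hf : f ∈ G.edgeSet) :
    f = e₁ ∨ f = e₂ ∨ f ∈ (deleteVertex G v).edgeSet := by
  by_cases hvf : v ∈ f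
  · have : f ∈ G.incidenceSet v := ⟨hf, hvf⟩
    rw [hat] at this
    exact (by simpa using this : f = e₁ ∨ f = e₂).imp_right Or.inl
  · exact Or.inr (Or.inr (mem_deleteVertex_edgeSet.2 ⟨hf, hvf⟩))

theorem IsStrongEdgeColoring.exists_extension_of_incidenceSet_eq_pair {G : SimpleGraph V}
    {v : V} {e₁ e₂ : Sym2 V} {φ : Sym2 V → β} {c₁ c₂ : β}
    (hφ : IsStrongEdgeColoring (deleteVertex G v) φ) (hat : G.incidenceSet v = {e₁, e₂})
    (hne : e₁ ≠ e₂) (hc₁ : c₁ ∉ seenColors G v φ e₁) (hc₂ : c₂ ∉ seenColors G v φ e₂)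
    (hc₁₂ : c₁ ≠ c₂) :
    ∃ c : Sym2 V → β, IsStrongEdgeColoring G c ∧ c e₁ = c₁ ∧ c e₂ = c₂ ∧
      ∀ f ∈ (deleteVertex G v).edgeSet, c f = φ f := by
  classical
  let c : Sym2 V → β := fun f => if f = e₁ then c₁ else if f = e₂ then c₂ else φ f
  have hce₁ : c e₁ = c₁ := if_pos rfl
  have hce₂ : c e₂ = c₂ := by simp [c, hne.symm]
  have hcφ : ∀ f ∈ (deleteVertex G v).edgeSet, c f = φ f := fun f hf => by
    have hvf := (mem_deleteVertex_edgeSet.1 hf).2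
    have h₁ : e₁ ∈ G.incidenceSet v := hat ▸ Set.mem_insert _ _
    have h₂ : e₂ ∈ G.incidenceSet v := hat ▸ Set.mem_insert_of_mem _ rfl
    simp only [c, if_neg (ne_of_mem_of_not_mem' h₁.2 hvf).symm,
      if_neg (ne_of_mem_of_not_mem' h₂.2 hvf).symm]
  have hat' : ∀ e ∈ G.edgeSet, v ∈ e → e = e₁ ∨ e = e₂ := fun e he hve => by
    simpa [hat] using (show e ∈ G.incidenceSet v from ⟨he, hve⟩)
  refine ⟨c, hφ.extend hcφ ?_ ?_, hce₁, hce₂, hcφ⟩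
  · intro e he hve
    rcases hat' e he hve with rfl | rfl
    exacts [hce₁ ▸ hc₁, hce₂ ▸ hc₂]
  · intro e he e' he' hve hve' hee'
    rcases hat' e he hve with rfl | rfl <;> rcases hat' e' he' hve' with rfl | rfl
    · exact absurd rfl hee'
    · exact hce₁ ▸ hce₂ ▸ hc₁₂
    · exact hce₁ ▸ hce₂ ▸ hc₁₂.symm
    · exact absurd rfl hee'

section Finite

variable [Fintype V] (G : SimpleGraph V) [DecidableRel G.Adj]

lemma incidenceSet_eq_pair_of_degree_eq_two {v : V} (hv : G.degree v = 2) {e₁ e₂ : Sym2 V}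
    (he₁ : e₁ ∈ G.incidenceSet v) (he₂ : e₂ ∈ G.incidenceSet v) (hne : e₁ ≠ e₂) :
    G.incidenceSet v = {e₁, e₂} := by
  classical
  have hsub : {e₁, e₂} ⊆ G.incidenceFinset v := by simp [insert_subset_iff, he₁, he₂]
  have heq := eq_of_subset_of_card_le hsub
    (by rw [card_incidenceFinset_eq_degree, hv, card_pair hne])
  rw [← coe_incidenceFinset, ← heq]
  simp

lemma card_incidenceFinset_sdiff_le [DecidableEq V] {a b : V} (h : G.Adj a b) :
    #(G.incidenceFinset a \ {s(a, b)}) ≤ G.maxDegree - 1 := by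
  rw [card_sdiff_of_subset (by simpa using h), card_incidenceFinset_eq_degree, card_singleton]
  exact Nat.sub_le_sub_right (G.degree_le_maxDegree a) 1

lemma card_neighborFinset_sdiff_le [DecidableEq V] {a b : V} (h : G.Adj a b) :
    #(G.neighborFinset a \ {b}) ≤ G.maxDegree - 1 := by
  rw [card_sdiff_of_subset (by simpa using h), card_neighborFinset_eq_degree, card_singleton]
  exact Nat.sub_le_sub_right (G.degree_le_maxDegree a) 1

lemma mem_union_biUnion_of_strongSees [DecidableEq V] {v u : V} {f : Sym2 V} (huv : G.Adj v u)
    (hf : f ∈ G.edgeSet) (hvf : v ∉ f) (hs : StrongSees G s(v, u) f) :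
    f ∈ (G.neighborFinset v).biUnion (fun a => G.incidenceFinset a \ {s(a, v)}) ∪
      (G.neighborFinset u \ {v}).biUnion (fun b => G.incidenceFinset b \ {s(b, u)}) := by
  have near : ∀ a, G.Adj v a → a ∈ f →
      f ∈ (G.neighborFinset v).biUnion (fun a => G.incidenceFinset a \ {s(a, v)}) := by
    intro a ha haf
    simp only [mem_biUnion, mem_sdiff, mem_neighborFinset, mem_incidenceFinset, mem_singleton]
    exact ⟨a, ha, ⟨hf, haf⟩, fun h => hvf (h ▸ Sym2.mem_mk_right a v)⟩
  rcases hs with ⟨x, hx, hxf⟩ | ⟨a, b, ha, hb, hab⟩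
  · rcases Sym2.mem_iff.1 hx with rfl | rfl
    · exact absurd hxf hvf
    · exact mem_union_left _ (near x huv hxf)
  · rcases Sym2.mem_iff.1 ha with rfl | rfl
    · exact mem_union_left _ (near b hab hb)
    · by_cases haf : a ∈ f
      · exact mem_union_left _ (near a huv haf)
      · refine mem_union_right _ ?_
        simp only [mem_biUnion, mem_sdiff, mem_neighborFinset, mem_incidenceFinset,
          mem_singleton]
        exact ⟨b, ⟨hab, ne_of_mem_of_not_mem hb hvf⟩, ⟨hf, hb⟩,
          fun h => haf (h ▸ Sym2.mem_mk_right b a)⟩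

lemma ncard_seenColors_le {v : V} {e : Sym2 V} (φ : Sym2 V → β) (he : e ∈ G.edgeSet)
    (hve : v ∈ e) :
    (seenColors G v φ e).ncard ≤
      G.degree v * (G.maxDegree - 1) + (G.maxDegree - 1) * (G.maxDegree - 1) := by
  classical
  obtain ⟨u, rfl⟩ : ∃ u, s(v, u) = e := ⟨_, Sym2.other_spec hve⟩
  have huv : G.Adj v u := he
  let A := (G.neighborFinset v).biUnion (fun a => G.incidenceFinset a \ {s(a, v)})
  let B := (G.neighborFinset u \ {v}).biUnion (fun b => G.incidenceFinset b \ {s(b, u)})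
  have hsub : seenColors G v φ s(v, u) ⊆ φ '' ↑(A ∪ B) := by
    rintro _ ⟨f, hf, hs, rfl⟩
    obtain ⟨hfG, hvf⟩ := mem_deleteVertex_edgeSet.1 hf
    exact Set.mem_image_of_mem φ (mem_union_biUnion_of_strongSees G huv hfG hvf hs)
  have hA : #A ≤ G.degree v * (G.maxDegree - 1) := by
    rw [← card_neighborFinset_eq_degree]
    exact card_biUnion_le_card_mul _ _ _
      fun a ha => card_incidenceFinset_sdiff_le G ((mem_neighborFinset G v a).1 ha).symm
  have hB : #B ≤ (G.maxDegree - 1) * (G.maxDegree - 1) :=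
    calc #B ≤ #(G.neighborFinset u \ {v}) * (G.maxDegree - 1) :=
          card_biUnion_le_card_mul _ _ _ fun b hb => card_incidenceFinset_sdiff_le G
            ((mem_neighborFinset G u b).1 (mem_sdiff.1 hb).1).symm
      _ ≤ _ := Nat.mul_le_mul_right _ (card_neighborFinset_sdiff_le G huv.symm)
  calc (seenColors G v φ s(v, u)).ncard ≤ (φ '' ↑(A ∪ B)).ncard := Set.ncard_le_ncard hsub
    _ ≤ #(A ∪ B) := (Set.ncard_image_le (Set.toFinite _)).trans (Set.ncard_coe_finset _).le
    _ ≤ #A + #B := card_union_le _ _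
    _ ≤ _ := by omega

lemma ncard_seenColors_le_eight (hΔ : G.maxDegree ≤ 3) {v : V} (hv : G.degree v = 2)
    {e : Sym2 V} (φ : Sym2 V → β) (he : e ∈ G.edgeSet) (hve : v ∈ e) :
    (seenColors G v φ e).ncard ≤ 8 := by
  have := ncard_seenColors_le G φ he hve
  have : G.maxDegree - 1 ≤ 2 := by omega
  rw [hv] at *
  nlinarith

end Finite

end

/-- If `v` has degree 2 with incident edges `e1, e2` and `φ` is a strong list
edge coloring of `G − v` (lists of size ≥ 10), then each `e_i` sees at most 8
colors, hence has at least 2 available colors, and `φ` extends to a strong list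
edge coloring of `G`. -/
theorem extend_at_two_vertex {V β : Type*} [Fintype V]
    (G : SimpleGraph V) [DecidableRel G.Adj] (hΔ : G.maxDegree ≤ 3)
    (v : V) (hv : G.degree v = 2) (e1 e2 : Sym2 V)
    (he1 : e1 ∈ G.edgeSet) (he2 : e2 ∈ G.edgeSet) (hne : e1 ≠ e2)
    (hve1 : v ∈ e1) (hve2 : v ∈ e2)
    (L : Sym2 V → Finset β) (hL : ∀ f ∈ G.edgeSet, 10 ≤ (L f).card)
    (φ : Sym2 V → β)
    (hφ : IsStrongEdgeColoring (deleteVertex G v) φ)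
    (hφL : ∀ f ∈ (deleteVertex G v).edgeSet, φ f ∈ L f) :
    (∀ e ∈ ({e1, e2} : Set (Sym2 V)),
        {α | ∃ e' ∈ (deleteVertex G v).edgeSet, StrongSees G e e' ∧ φ e' = α}.ncard ≤ 8 ∧
        2 ≤ ((L e : Set β) \
          {α | ∃ e' ∈ (deleteVertex G v).edgeSet, StrongSees G e e' ∧ φ e' = α}).ncard) ∧
      ∃ c : Sym2 V → β, IsStrongEdgeColoring G c ∧ (∀ f ∈ G.edgeSet, c f ∈ L f) ∧
        ∀ f ∈ (deleteVertex G v).edgeSet, c f = φ f := by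
  have hat := incidenceSet_eq_pair_of_degree_eq_two G hv ⟨he1, hve1⟩ ⟨he2, hve2⟩ hne
  have hfree : ∀ e ∈ G.edgeSet, v ∈ e →
      (seenColors G v φ e).ncard ≤ 8 ∧ 2 ≤ ((L e : Set β) \ seenColors G v φ e).ncard := by
    intro e he hve
    have h8 := ncard_seenColors_le_eight G hΔ hv φ he hve
    have hdiff := Set.le_ncard_sdiff _ (L e : Set β) (seenColors_finite G v φ e)
    rw [Set.ncard_coe_finset] at hdiff
    exact ⟨h8, by have := hL e he; omega⟩
  obtain ⟨c₁, hc₁⟩ := Set.nonempty_of_ncard_ne_zero (two_pos.trans_le (hfree e1 he1 hve1).2).ne'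
  obtain ⟨c₂, hc₂, hc₂₁⟩ := Set.exists_ne_of_one_lt_ncard (hfree e2 he2 hve2).2 c₁
  obtain ⟨c, hc, hce1, hce2, hcφ⟩ :=
    hφ.exists_extension_of_incidenceSet_eq_pair hat hne hc₁.2 hc₂.2 hc₂₁.symm
  refine ⟨fun e he => ?_, c, hc, fun f hf => ?_, hcφ⟩
  · rcases he with rfl | rfl
    exacts [hfree e he1 hve1, hfree e he2 hve2]
  · rcases eq_or_eq_or_mem_deleteVertex_edgeSet hat hf with rfl | rfl | hfH
    exacts [hce1 ▸ hc₁.1, hce2 ▸ hc₂.1, hcφ f hfH ▸ hφL f hfH]
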